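/- Let ρ be the unique fixed point of the Fibonacci substitution H (an infinite sequence starting with 0). If x is an infinite binary sequence starting with 0, then H^n(x) and ρ agree on at least their first F_{n+3}−2 symbols; if x starts with 1, then H^n(x) and ρ agree on at least their first F_{n+2}−2 symbols. -/

import Mathlib

/-!
Since `H` is a morphism, `H^n(a s) = H^n(a) H^n(s)`, and `|H^n(0)| = F_{n+1}`. Two sequences
starting with `0` therefore have `H^n`-images sharing the prefix `H^n(0)`, followed by
`H^n`-images of two arbitrary sequences. Every `H(u)` starts with `0`, so by induction the
`H^n`-images of any two sequences agree on `F_{n+2} - 2` symbols, and those of two sequences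
starting with `0` on `F_{n+1} + F_{n+2} - 2 = F_{n+3} - 2` symbols. Compare with `ρ = H^n(ρ)`.
-/

/-- Fibonacci substitution on finite words: H(0)=01, H(1)=0 (0 ↦ `false`, 1 ↦ `true`). -/
def Hword : List Bool → List Bool
  | [] => []
  | false :: t => false :: true :: Hword t
  | true :: t => false :: Hword t

/-- Paper-indexed Fibonacci numbers, shifted by 2: `fibP k = F_{k-2}`, so
`fibP 0 = F_{-2} = 1`, `fibP 1 = F_{-1} = 0`, `fibP 2 = F_0 = 1`, `fibP 3 = F_1 = 1`, … -/
def fibP : ℕ → ℕ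
  | 0 => 1
  | 1 => 0
  | n + 2 => fibP (n + 1) + fibP n

/-- Fibonacci substitution on infinite binary sequences. -/
def Hseq (x : ℕ → Bool) : ℕ → Bool :=
  fun n => (Hword ((List.range (n + 1)).map x)).getD n false

/-- The left shift on infinite binary sequences. -/
def shift (x : ℕ → Bool) : ℕ → Bool := fun n => x (n + 1)

def prepend {α : Type*} (w : List α) (s : ℕ → α) : ℕ → α :=
  fun n => if h : n < w.length then w[n] else s (n - w.length)

section prepend

variable {α : Type*} (w : List α) (s : ℕ → α)

lemma prepend_apply_of_lt {n : ℕ} (h : n < w.length) : prepend w s n = w[n] :=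
  dif_pos h

lemma prepend_apply_of_le {n : ℕ} (h : w.length ≤ n) : prepend w s n = s (n - w.length) :=
  dif_neg h.not_gt

lemma map_range_prepend (m : ℕ) :
    (List.range (w.length + m)).map (prepend w s) = w ++ (List.range m).map s := by
  rw [List.range_add, List.map_append, List.map_map]
  congr 1
  · refine List.ext_getElem (by simp) fun i hi _ => ?_
    simp only [List.length_map, List.length_range] at hi
    simp [prepend_apply_of_lt w s hi]
  · exact List.map_congr_left fun i _ => by simp [prepend]

lemma prepend_apply_eq_of_lt {t : ℕ → α} {k : ℕ} (hst : ∀ i < k, s i = t i) {i : ℕ}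
    (hi : i < w.length + k) : prepend w s i = prepend w t i := by
  by_cases h : i < w.length
  · rw [prepend_apply_of_lt w s h, prepend_apply_of_lt w t h]
  · rw [prepend_apply_of_le w s (not_lt.1 h), prepend_apply_of_le w t (not_lt.1 h)]
    exact hst _ (by omega)

end prepend

lemma Hword_append (u v : List Bool) : Hword (u ++ v) = Hword u ++ Hword v := by
  induction u with
  | nil => rfl
  | cons a u ih => cases a <;> simp [Hword, ih]

lemma Hword_iterate_append (n : ℕ) (u v : List Bool) :
    Hword^[n] (u ++ v) = Hword^[n] u ++ Hword^[n] v := by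
  induction n generalizing u v with
  | zero => rfl
  | succ n ih => simp only [Function.iterate_succ_apply, Hword_append, ih]

lemma length_le_length_Hword (w : List Bool) : w.length ≤ (Hword w).length := by
  induction w with
  | nil => rfl
  | cons a w ih => cases a <;> simp [Hword] <;> omega

lemma length_Hword_iterate (n : ℕ) :
    (Hword^[n] [false]).length = fibP (n + 3) ∧ (Hword^[n] [true]).length = fibP (n + 2) := by
  induction n with
  | zero => exact ⟨rfl, rfl⟩
  | succ n ih =>
    have hfalse : Hword [false] = [false] ++ [true] := rfl
    refine ⟨?_, ih.1⟩
    rw [Function.iterate_succ_apply, hfalse, Hword_iterate_append, List.length_append, ih.1, ih.2]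
    rfl

lemma prepend_head_shift (x : ℕ → Bool) : prepend [x 0] (shift x) = x := by
  funext n
  cases n <;> simp [prepend, shift]

lemma Hseq_apply_of_lt (x : ℕ → Bool) {n m : ℕ} (h : n < m) :
    Hseq x n = (Hword ((List.range m).map x)).getD n false := by
  obtain ⟨k, rfl⟩ := Nat.exists_eq_add_of_lt h
  have hn : n < (Hword ((List.range (n + 1)).map x)).length :=
    (Nat.lt_succ_self n).trans_le (by simpa using length_le_length_Hword ((List.range (n + 1)).map x))
  rw [Nat.add_right_comm, List.range_add, List.map_append, Hword_append,
    List.getD_append _ _ _ _ hn]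
  rfl

lemma Hseq_prepend (w : List Bool) (s : ℕ → Bool) :
    Hseq (prepend w s) = prepend (Hword w) (Hseq s) := by
  funext n
  rw [Hseq_apply_of_lt _ (show n < w.length + (n + 1) by omega), map_range_prepend,
    Hword_append]
  by_cases h : n < (Hword w).length
  · rw [List.getD_append _ _ _ _ h, List.getD_eq_getElem _ _ h, prepend_apply_of_lt _ _ h]
  · rw [List.getD_append_right _ _ _ _ (not_lt.1 h), prepend_apply_of_le _ _ (not_lt.1 h),
      Hseq_apply_of_lt s (show n - (Hword w).length < n + 1 by omega)]

lemma Hseq_iterate_prepend (n : ℕ) (w : List Bool) (s : ℕ → Bool) :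
    Hseq^[n] (prepend w s) = prepend (Hword^[n] w) (Hseq^[n] s) := by
  induction n generalizing w s with
  | zero => rfl
  | succ n ih => simp only [Function.iterate_succ_apply, Hseq_prepend, ih]

lemma Hseq_apply_zero (x : ℕ → Bool) : Hseq x 0 = false := by
  cases h : x 0 <;> simp [Hseq, Hword, h]

lemma Hseq_iterate_apply_eq_of_head_false (n : ℕ)
    (h : ∀ u v : ℕ → Bool, ∀ i < fibP (n + 4) - 2, Hseq^[n] u i = Hseq^[n] v i)
    {u v : ℕ → Bool} (hu : u 0 = false) (hv : v 0 = false) :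
    ∀ i < fibP (n + 5) - 2, Hseq^[n] u i = Hseq^[n] v i := by
  intro i hi
  rw [← prepend_head_shift u, ← prepend_head_shift v, hu, hv, Hseq_iterate_prepend,
    Hseq_iterate_prepend]
  refine prepend_apply_eq_of_lt _ _ (h _ _) ?_
  have hfib : fibP (n + 5) = fibP (n + 4) + fibP (n + 3) := rfl
  rw [(length_Hword_iterate n).1]
  omega

lemma Hseq_iterate_apply_eq (n : ℕ) (u v : ℕ → Bool) :
    ∀ i < fibP (n + 4) - 2, Hseq^[n] u i = Hseq^[n] v i := by
  induction n generalizing u v with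
  | zero => intro i hi; exact absurd hi (Nat.not_lt_zero i)
  | succ n ih =>
    simp only [Function.iterate_succ_apply]
    exact Hseq_iterate_apply_eq_of_head_false n ih (Hseq_apply_zero u) (Hseq_apply_zero v)

/-- if `x` starts with `0` then `H^n(x)` agrees with `ρ` on at least the first
`F_{n+3} - 2 = fibP (n+5) - 2` symbols; if `x` starts with `1`, on at least the first
`F_{n+2} - 2 = fibP (n+4) - 2` symbols. -/
theorem Hn_agrees_with_rho (ρ : ℕ → Bool) (hρ : Hseq ρ = ρ)
    (x : ℕ → Bool) (n : ℕ) :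
    (x 0 = false → ∀ i < fibP (n + 5) - 2, Hseq^[n] x i = ρ i) ∧
    (x 0 = true → ∀ i < fibP (n + 4) - 2, Hseq^[n] x i = ρ i) := by
  have hfix : Hseq^[n] ρ = ρ := Function.iterate_fixed hρ n
  have hρ0 : ρ 0 = false := hρ ▸ Hseq_apply_zero ρ
  refine ⟨fun hx i hi => ?_, fun _ i hi => ?_⟩
  · rw [← hfix]
    exact Hseq_iterate_apply_eq_of_head_false n (Hseq_iterate_apply_eq n) hx hρ0 i hi
  · rw [← hfix]
    exact Hseq_iterate_apply_eq n x ρ i hi
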